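/- Let A be a finite-dimensional associative unital k-algebra with a k-basis B, and let f : B → k be a function. If x ∈ A is a unit such that left multiplication by x maps the set B bijectively onto itself, then the k-linear map ψ_x : A → A given by ψ_x(a) = x a is an automorphism of the Cayley evolution algebra Cay(f). If moreover every element of B is a unit of A, then for every unit x ≠ 1 with xB = B, the map ψ_x fixes no element of B. -/

import Mathlib

/-! Left multiplication by `x` permutes the basis, `x * b i = b (e i)`, so it moves the coordinates
of every vector along `e`. By associativity, `x * (b i * b j) = b (e i) * b j`, so it carries the
`i`-th term of the Cayley product of `u` and `v` to the `e i`-th term of the product of `x u` and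
`x v`. -/

open scoped BigOperators

variable {k : Type*} [Field k] {ι : Type*} [Fintype ι]
  {A : Type*} [Ring A] [Algebra k A]

/-- The Cayley evolution product on a finite-dimensional associative unital `k`-algebra `A`
with basis `b`: it is the `k`-bilinear product with `bᵢ · bᵢ = ∑ⱼ f j • (bᵢ * bⱼ)`
(product taken in `A`) and `bᵢ · bⱼ = 0` for `i ≠ j`. -/
noncomputable def cayMulA (b : Module.Basis ι k A) (f : ι → k) (x y : A) : A :=
  ∑ i : ι, (b.repr x i * b.repr y i) • ∑ j : ι, f j • (b i * b j)

theorem Function.Injective.exists_perm_of_bijOn_range {κ α : Type*} {v : κ → α}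
    (hv : Function.Injective v) {g : α → α} (hg : Set.BijOn g (Set.range v) (Set.range v)) :
    ∃ e : Equiv.Perm κ, ∀ i, v (e i) = g (v i) :=
  let r := Equiv.ofInjective v hv
  ⟨(r.trans (hg.equiv g)).trans r.symm, fun _ => Equiv.apply_ofInjective_symm hv _⟩

theorem Module.Basis.repr_equiv_apply {R κ κ' M M' : Type*} [Semiring R]
    [AddCommMonoid M] [Module R M] [AddCommMonoid M'] [Module R M']
    (b : Basis κ R M) (b' : Basis κ' R M') (e : κ ≃ κ') (u : M) (i : κ) :
    b'.repr (b.equiv b' e u) (e i) = b.repr u i := by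
  have h : (b'.reindex e.symm).repr (b.equiv b' e u) = b.repr u := by
    simp only [Basis.equiv, LinearEquiv.trans_apply, LinearEquiv.apply_symm_apply]
  rw [← h, repr_reindex_apply, Equiv.symm_symm]

theorem Module.Basis.equiv_apply_eq_mul_left {R κ B : Type*} [CommSemiring R] [Semiring B]
    [Algebra R B] (b : Basis κ R B) {x : B} {e : κ ≃ κ} (he : ∀ i, b (e i) = x * b i) (a : B) :
    b.equiv b e a = x * a := by
  have h : (b.equiv b e : B →ₗ[R] B) = LinearMap.mulLeft R x := b.ext fun i => by simp [he]
  exact LinearMap.congr_fun h a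

theorem cayMulA_mul_left (b : Module.Basis ι k A) (f : ι → k) {x : A} {e : ι ≃ ι}
    (he : ∀ i, b (e i) = x * b i) (u v : A) :
    x * cayMulA b f u v = cayMulA b f (x * u) (x * v) := by
  have hrepr : ∀ w i, b.repr (x * w) (e i) = b.repr w i := fun w i => by
    rw [← b.equiv_apply_eq_mul_left he, b.repr_equiv_apply]
  unfold cayMulA
  conv_rhs => rw [← e.sum_comp]
  simp only [hrepr, Finset.mul_sum, mul_smul_comm, ← mul_assoc, ← he]

theorem units_give_cayley_automorphisms_general {k : Type*} [Field k] {ι : Type*} [Fintype ι]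
    {A : Type*} [Ring A] [Algebra k A] (b : Module.Basis ι k A) (f : ι → k)
    (x : A)
    (hB : Set.BijOn (fun a => x * a) (Set.range ⇑b) (Set.range ⇑b)) :
    (∃ ψ : A ≃ₗ[k] A, (∀ a : A, ψ a = x * a) ∧
      ∀ u v : A, ψ (cayMulA b f u v) = cayMulA b f (ψ u) (ψ v)) ∧
    ((∀ i, IsUnit (b i)) → x ≠ 1 → ∀ i : ι, x * b i ≠ b i) := by
  obtain ⟨e, he⟩ := b.injective.exists_perm_of_bijOn_range hB
  have hψ := b.equiv_apply_eq_mul_left he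
  refine ⟨⟨b.equiv b e, hψ, fun u v => ?_⟩, fun hunit hx1 i => ?_⟩
  · simp only [hψ, cayMulA_mul_left b f he]
  · rwa [Ne, (hunit i).mul_eq_right]

/-- If `x ∈ A` is a unit whose left multiplication maps the basis set `B`
bijectively onto itself, then `a ↦ x * a` is a `k`-linear automorphism of the Cayley
evolution algebra `Cay(f)`; if moreover every basis element is a unit, then for `x ≠ 1`
this automorphism fixes no basis element. -/
theorem units_give_cayley_automorphisms {k : Type*} [Field k] {ι : Type*} [Fintype ι]
    {A : Type*} [Ring A] [Algebra k A] (b : Module.Basis ι k A) (f : ι → k)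
    (x : A) (hx : IsUnit x)
    (hB : Set.BijOn (fun a => x * a) (Set.range ⇑b) (Set.range ⇑b)) :
    (∃ ψ : A ≃ₗ[k] A, (∀ a : A, ψ a = x * a) ∧
      ∀ u v : A, ψ (cayMulA b f u v) = cayMulA b f (ψ u) (ψ v)) ∧
    ((∀ i, IsUnit (b i)) → x ≠ 1 → ∀ i : ι, x * b i ≠ b i) :=
  units_give_cayley_automorphisms_general b f x hB
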